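/- arXiv:1701.08710 — 4 statements merged into one kernel-verified Lean document; each statement's English description precedes it below -/
import Mathlib

section
/- For every q > 1 with 1/p + 1/q = 1 (p > 1), the sum ∑_{k=1}^∞ 1/k^q is finite and satisfies (∑_{k=1}^∞ 1/k^q)^{1/q} ≤ C · p for some absolute constant C > 0 independent of p. -/
open Real

/-! Comparing the sum with `∫₁^∞ x^(-q) dx` gives `ζ(q) ≤ 1 + 1/(q-1) = q/(q-1)`, and for
conjugate exponents `q/(q-1) = p`. Since `p ≥ 1` and `1/q ≤ 1`, we get
`ζ(q)^(1/q) ≤ p^(1/q) ≤ p`, so `C = 1` works. -/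

lemma summable_one_div_nat_add_one_rpow {s : ℝ} (hs : 1 < s) :
    Summable fun n : ℕ => 1 / ((n : ℝ) + 1) ^ s :=
  ((summable_one_div_nat_add_rpow 1 s).mpr hs).congr fun n => by
    rw [abs_of_nonneg (by positivity)]

lemma tsum_one_div_nat_add_one_rpow_le {s : ℝ} (hs : 1 < s) :
    ∑' n : ℕ, 1 / ((n : ℝ) + 1) ^ s ≤ s / (s - 1) := by
  have hs0 : 0 < s := by linarith
  -- `termTSum s` is the total error of the integral comparison, which is nonnegative
  have herr : 0 ≤ ZetaAsymptotics.termTSum s :=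
    tsum_nonneg fun n => ZetaAsymptotics.term_nonneg _ _
  rw [ZetaAsymptotics.termTSum_of_lt hs] at herr
  rw [div_eq_mul_one_div s]
  calc ∑' n : ℕ, 1 / ((n : ℝ) + 1) ^ s
      = s * (1 / s * ∑' n : ℕ, 1 / ((n : ℝ) + 1) ^ s) := by field_simp
    _ ≤ s * (1 / (s - 1)) := by gcongr; linarith

lemma Real.HolderConjugate.div_sub_one_eq {p q : ℝ} (h : p.HolderConjugate q) :
    q / (q - 1) = p := by
  rw [← h.symm.div_conj_eq_sub_one, div_div_cancel₀ h.symm.ne_zero]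

/-- For every p > 1 with conjugate q = p/(p-1), ∑ 1/k^q is finite and
(∑ 1/k^q)^{1/q} ≤ C·p for an absolute constant C. -/
theorem stmt0 : ∃ C : ℝ, 0 < C ∧ ∀ p : ℝ, 1 < p →
    Summable (fun k : ℕ => 1 / ((k : ℝ) + 1) ^ (p / (p - 1))) ∧
    (∑' k : ℕ, 1 / ((k : ℝ) + 1) ^ (p / (p - 1))) ^ ((p - 1) / p) ≤ C * p := by
  refine ⟨1, one_pos, fun p hp => ?_⟩
  have hpq : p.HolderConjugate (p / (p - 1)) := .conjExponent hp
  have hq : 1 < p / (p - 1) := hpq.symm.lt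
  refine ⟨summable_one_div_nat_add_one_rpow hq, ?_⟩
  have hexp : (p - 1) / p ≤ 1 := (div_le_one (by linarith)).mpr (by linarith)
  calc (∑' k : ℕ, 1 / ((k : ℝ) + 1) ^ (p / (p - 1))) ^ ((p - 1) / p)
      ≤ p ^ ((p - 1) / p) := by
        gcongr
        exact (tsum_one_div_nat_add_one_rpow_le hq).trans_eq hpq.div_sub_one_eq
    _ ≤ 1 * p := (one_mul p).symm ▸ rpow_le_self_of_one_le hp.le hexp
end

section
/- There exists an absolute constant d > 1 such that for all real s ≥ 1, exp(√(s/ln ln(s+2))) ≤ ∑_{k=1}^∞ ((d/k)·√(s/ln ln(k+2)))^k. -/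
open Real

lemma log_ge_one_sub_inv {y : ℝ} (hy : 0 < y) : 1 - 1/y ≤ Real.log y := by
  have h := Real.one_sub_inv_le_log_of_pos hy
  rw [one_div]; exact h

lemma log3_ge : (17:ℝ)/16 ≤ Real.log 3 := by
  rw [Real.le_log_iff_exp_le (by norm_num)]
  have h1 : Real.exp (17/16) = Real.exp 1 * Real.exp (1/16) := by
    rw [← Real.exp_add]; norm_num
  have hm : Real.exp (1/16) * Real.exp (-(1/16)) = 1 := by
    rw [← Real.exp_add]; norm_num
  have hge : (15:ℝ)/16 ≤ Real.exp (-(1/16)) := by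
    have := Real.add_one_le_exp (-(1/16 : ℝ)); linarith
  have h3 := Real.exp_one_lt_d9
  have h4 := Real.exp_pos (1/16 : ℝ)
  nlinarith

lemma loglog_ge {t : ℝ} (ht : 3 ≤ t) : 1/17 ≤ Real.log (Real.log t) := by
  have h1 : (17:ℝ)/16 ≤ Real.log t :=
    le_trans log3_ge (Real.log_le_log (by norm_num) ht)
  have h3 : Real.log (17/16) ≤ Real.log (Real.log t) :=
    Real.log_le_log (by norm_num) h1
  have h4 := log_ge_one_sub_inv (show (0:ℝ) < 17/16 by norm_num)
  norm_num at h4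
  linarith

set_option maxHeartbeats 1000000 in
/-- There exists d > 1 such that for all s ≥ 1,
exp(√(s/ln ln(s+2))) ≤ ∑_{k=1}^∞ ((d/k)·√(s/ln ln(k+2)))^k, the series converging. -/
theorem stmt1 : ∃ d : ℝ, 1 < d ∧ ∀ s : ℝ, 1 ≤ s →
    Summable (fun k : ℕ =>
      ((d / ((k : ℝ) + 1)) * Real.sqrt (s / Real.log (Real.log (((k : ℝ) + 1) + 2)))) ^ (k + 1)) ∧
    Real.exp (Real.sqrt (s / Real.log (Real.log (s + 2)))) ≤
      ∑' k : ℕ,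
        ((d / ((k : ℝ) + 1)) * Real.sqrt (s / Real.log (Real.log (((k : ℝ) + 1) + 2)))) ^ (k + 1) := by
  refine ⟨33, by norm_num, fun s hs => ?_⟩
  have hs0 : (0:ℝ) < s := by linarith
  set f : ℕ → ℝ := fun k =>
    ((33 / ((k : ℝ) + 1)) * Real.sqrt (s / Real.log (Real.log (((k : ℝ) + 1) + 2)))) ^ (k + 1)
    with hf
  -- basic facts about each term
  have hLk : ∀ k : ℕ, (1:ℝ)/17 ≤ Real.log (Real.log (((k : ℝ) + 1) + 2)) := by
    intro k
    apply loglog_ge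
    have : (0:ℝ) ≤ (k:ℝ) := Nat.cast_nonneg k
    linarith
  have hfnonneg : ∀ k : ℕ, 0 ≤ f k := by
    intro k
    apply pow_nonneg
    apply mul_nonneg _ (Real.sqrt_nonneg _)
    positivity
  -- summability
  set c : ℝ := 33 * Real.sqrt (17 * s) with hc
  have hc0 : 0 ≤ c := by positivity
  have hbound : ∀ k : ℕ, f k ≤ c ^ (k+1) / (Nat.factorial (k+1)) := by
    intro k
    have hk1 : (0:ℝ) < (k:ℝ) + 1 := by positivity
    have hLpos : (0:ℝ) < Real.log (Real.log (((k : ℝ) + 1) + 2)) :=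
      lt_of_lt_of_le (by norm_num) (hLk k)
    have hsq : Real.sqrt (s / Real.log (Real.log (((k : ℝ) + 1) + 2))) ≤ Real.sqrt (17 * s) := by
      apply Real.sqrt_le_sqrt
      rw [div_le_iff₀ hLpos]
      have := hLk k
      nlinarith
    have hbase : (33 / ((k : ℝ) + 1)) * Real.sqrt (s / Real.log (Real.log (((k : ℝ) + 1) + 2)))
        ≤ c / ((k:ℝ)+1) := by
      have h0 := mul_le_mul_of_nonneg_left hsq (show (0:ℝ) ≤ 33/((k:ℝ)+1) by positivity)
      have heq : 33/((k:ℝ)+1) * Real.sqrt (17*s) = c / ((k:ℝ)+1) := by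
        rw [hc]; field_simp
      linarith
    have h1 : f k ≤ (c / ((k:ℝ)+1)) ^ (k+1) := by
      apply pow_le_pow_left₀ _ hbase
      apply mul_nonneg _ (Real.sqrt_nonneg _)
      positivity
    refine h1.trans ?_
    rw [div_pow]
    have hfac : (Nat.factorial (k+1) : ℝ) ≤ ((k:ℝ)+1) ^ (k+1) := by
      have := Nat.factorial_le_pow (k+1)
      exact_mod_cast this
    have hfacpos : (0:ℝ) < (Nat.factorial (k+1) : ℝ) := by
      exact_mod_cast Nat.factorial_pos (k+1)
    exact div_le_div_of_nonneg_left (pow_nonneg hc0 _) hfacpos hfac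
  have hsummable : Summable f := by
    have hg : Summable (fun k : ℕ => c ^ (k+1) / (Nat.factorial (k+1) : ℝ)) := by
      exact (summable_nat_add_iff 1).2 (Real.summable_pow_div_factorial c)
    exact Summable.of_nonneg_of_le hfnonneg hbound hg
  refine ⟨hsummable, ?_⟩
  -- lower bound by a single term
  set L : ℝ := Real.log (Real.log (s + 2)) with hL
  have hL17 : 1/17 ≤ L := loglog_ge (by linarith)
  have hLpos : 0 < L := lt_of_lt_of_le (by norm_num) hL17
  have hLs : L ≤ s := by
    have h1 : Real.log (s + 2) ≤ s + 1 := by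
      have := Real.log_le_sub_one_of_pos (show (0:ℝ) < s + 2 by linarith)
      linarith
    have h2 : L ≤ Real.log (s + 2) - 1 := by
      have hpos : (0:ℝ) < Real.log (s + 2) := by
        have : (17:ℝ)/16 ≤ Real.log (s+2) :=
          le_trans log3_ge (Real.log_le_log (by norm_num) (by linarith))
        linarith
      have := Real.log_le_sub_one_of_pos hpos
      rw [hL]; linarith
    linarith
  set x : ℝ := Real.sqrt (s / L) with hx
  have hx1 : 1 ≤ x := by
    rw [hx, Real.one_le_sqrt]
    rw [le_div_iff₀ hLpos]; linarith
  have hx0 : 0 < x := by linarith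
  set n : ℕ := ⌈x⌉₊ with hn
  have hxn : x ≤ (n:ℝ) := Nat.le_ceil x
  have hn1 : 1 ≤ n := by
    have : (0:ℝ) < (n:ℝ) := lt_of_lt_of_le hx0 hxn
    exact_mod_cast Nat.succ_le_of_lt (by exact_mod_cast this)
  have hnx1 : (n:ℝ) ≤ x + 1 := by
    have h := Nat.ceil_lt_add_one (le_of_lt hx0)
    exact le_of_lt h
  have hnx : (n:ℝ) ≤ 2 * x := by linarith
  have hnpos : (0:ℝ) < (n:ℝ) := lt_of_lt_of_le hx0 hxn
  -- bound on x : x ≤ 5 s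
  have hx5s : x ≤ 5 * s := by
    have h1 : s / L ≤ 17 * s := by
      rw [div_le_iff₀ hLpos]; nlinarith
    have h2 : x ≤ Real.sqrt (17 * s) := by
      rw [hx]; exact Real.sqrt_le_sqrt h1
    have h3 : Real.sqrt (17 * s) ≤ 5 * s := by
      have h4 : Real.sqrt (17 * s) ≤ Real.sqrt ((5*s)^2) := Real.sqrt_le_sqrt (by nlinarith)
      rwa [Real.sqrt_sq (by linarith)] at h4
    linarith
  -- log log (n+2) ≤ 35 L
  set Ln : ℝ := Real.log (Real.log ((n:ℝ) + 2)) with hLn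
  have hLn17 : 1/17 ≤ Ln := by
    apply loglog_ge
    have : (1:ℝ) ≤ (n:ℝ) := by exact_mod_cast hn1
    linarith
  have hLnpos : 0 < Ln := lt_of_lt_of_le (by norm_num) hLn17
  have he1 := Real.exp_one_lt_d9
  have he1' := Real.exp_one_gt_d9
  have hlogn : Real.log ((n:ℝ) + 2) ≤ 4 * Real.log (s + 2) := by
    have h8s : (n:ℝ) + 2 ≤ 8 * s := by linarith
    have h1 : Real.log ((n:ℝ) + 2) ≤ Real.log (8 * s) :=
      Real.log_le_log (by positivity) h8s
    have h2 : Real.log (8 * s) = Real.log 8 + Real.log s := by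
      rw [Real.log_mul (by norm_num) (ne_of_gt hs0)]
    have h3 : Real.log 8 ≤ 3 := by
      have hl2 : Real.log 2 ≤ 1 := by
        have := Real.log_le_sub_one_of_pos (show (0:ℝ) < 2 by norm_num)
        linarith
      rw [show (8:ℝ) = 2^(3:ℕ) by norm_num, Real.log_pow]
      push_cast; linarith
    have h4 : Real.log s ≤ Real.log (s + 2) := Real.log_le_log hs0 (by linarith)
    have h5 : (1:ℝ) ≤ Real.log (s + 2) := by
      rw [Real.le_log_iff_exp_le (by linarith)]
      nlinarith
    linarith
  have hLn35 : Ln ≤ 35 * L := by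
    have hlogpos : (0:ℝ) < Real.log ((n:ℝ) + 2) := by
      have : (17:ℝ)/16 ≤ Real.log ((n:ℝ)+2) := by
        apply le_trans log3_ge
        apply Real.log_le_log (by norm_num)
        have : (1:ℝ) ≤ (n:ℝ) := by exact_mod_cast hn1
        linarith
      linarith
    have h1 : Ln ≤ Real.log (4 * Real.log (s + 2)) :=
      Real.log_le_log hlogpos hlogn
    have h2 : Real.log (4 * Real.log (s + 2)) = Real.log 4 + L := by
      rw [Real.log_mul (by norm_num) (by
        have : (0:ℝ) < Real.log (s+2) := by
          have : (17:ℝ)/16 ≤ Real.log (s+2) :=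
            le_trans log3_ge (Real.log_le_log (by norm_num) (by linarith))
          linarith
        exact ne_of_gt this)]
    have h3 : Real.log 4 ≤ 2 := by
      have hl2 : Real.log 2 ≤ 1 := by
        have := Real.log_le_sub_one_of_pos (show (0:ℝ) < 2 by norm_num)
        linarith
      rw [show (4:ℝ) = 2^(2:ℕ) by norm_num, Real.log_pow]
      push_cast; linarith
    have h4 : (2:ℝ) ≤ 34 * L := by linarith
    linarith
  -- the key term bound
  have hsqrtLn : x / 6 ≤ Real.sqrt (s / Ln) := by
    rw [Real.le_sqrt (by positivity) (by positivity)]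
    have hxsq : x ^ 2 = s / L := Real.sq_sqrt (by positivity)
    have h1 : s / (36 * L) ≤ s / Ln := by
      apply div_le_div_of_nonneg_left (le_of_lt hs0) hLnpos
      linarith
    have h2 : (x/6)^2 = (s / L) / 36 := by rw [div_pow, hxsq]; norm_num
    rw [h2]
    have : s / L / 36 = s / (36 * L) := by
      rw [div_div]; ring_nf
    linarith [this ▸ h1, h1, this.le]
  have hbase : Real.exp 1 ≤ 33 / (n:ℝ) * Real.sqrt (s / Ln) := by
    have h1 : (33:ℝ) / (2 * x) ≤ 33 / (n:ℝ) :=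
      div_le_div_of_nonneg_left (by norm_num) hnpos hnx
    have h2 : (33:ℝ) / (2 * x) * (x / 6) ≤ 33 / (n:ℝ) * Real.sqrt (s / Ln) := by
      apply mul_le_mul h1 hsqrtLn (by positivity)
      positivity
    have h3 : (33:ℝ) / (2 * x) * (x / 6) = 11 / 4 := by
      field_simp; ring
    rw [h3] at h2
    linarith
  -- the chosen term dominates exp x
  have hterm : Real.exp x ≤ f (n - 1) := by
    have hcast : ((n - 1 : ℕ) : ℝ) + 1 = (n : ℝ) := by
      have : ((n - 1 : ℕ) : ℝ) = (n:ℝ) - 1 := by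
        rw [Nat.cast_sub hn1]; norm_num
      rw [this]; ring
    have hexp : (n - 1) + 1 = n := Nat.succ_pred_eq_of_pos hn1
    have hfval : f (n - 1) = (33 / (n:ℝ) * Real.sqrt (s / Ln)) ^ n := by
      rw [hf]
      simp only [hcast, hexp, hLn]
    rw [hfval]
    calc Real.exp x ≤ Real.exp (n:ℝ) := Real.exp_le_exp.2 hxn
      _ = Real.exp 1 ^ n := by
          rw [← Real.exp_nat_mul]; norm_num
      _ ≤ (33 / (n:ℝ) * Real.sqrt (s / Ln)) ^ n := by
          apply pow_le_pow_left₀ (le_of_lt (Real.exp_pos 1)) hbase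
  -- conclude
  have htsum : f (n - 1) ≤ ∑' k, f k :=
    Summable.le_tsum hsummable (n - 1) (fun j _ => hfnonneg j)
  calc Real.exp (Real.sqrt (s / Real.log (Real.log (s + 2)))) = Real.exp x := by rw [hx, hL]
    _ ≤ f (n - 1) := hterm
    _ ≤ ∑' k, f k := htsum
end

section
/- For nonnegative reals b₁, …, b_N and q ≥ 1 one has (∑_{j=1}^N b_j^q)^{1/q} ≤ max(1, ∑_{j=1}^N b_j^q); more generally, if each b_j ≤ 1, then sup_{p>1} (∑_j b_j^q)^{1/q} / (p ln ln(p+2)) ≤ C·max(1, sup_{p>1} (∑_j b_j^q)/(p ln ln(p+2))) for an absolute constant C, where q = p/(p−1). -/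
open Real Finset

lemma stmt8_aux (N : ℕ) (b : Fin N → ℝ) (hb : ∀ j, 0 ≤ b j) (q : ℝ) (hq : 1 ≤ q) :
    (∑ j, b j ^ q) ^ (1 / q) ≤ max 1 (∑ j, b j ^ q) := by
  have hq0 : 0 < q := lt_of_lt_of_le one_pos hq
  set S := ∑ j, b j ^ q with hS
  have hS0 : 0 ≤ S := Finset.sum_nonneg fun j _ => Real.rpow_nonneg (hb j) q
  rcases le_or_gt S 1 with h | h
  · exact le_max_of_le_left (Real.rpow_le_one hS0 h (by positivity))
  · refine le_max_of_le_right ?_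
    calc S ^ (1/q) ≤ S ^ (1:ℝ) :=
          Real.rpow_le_rpow_of_exponent_le h.le (by rw [div_le_one hq0]; exact hq)
      _ = S := Real.rpow_one S

lemma stmt8_logdenom {p : ℝ} (hp : 1 < p) :
    Real.log (Real.log 3) ≤ p * Real.log (Real.log (p + 2)) := by
  have h3 : (1:ℝ) < Real.log 3 := by
    have := Real.exp_one_lt_d9
    have h : Real.exp 1 < 3 := by linarith
    calc (1:ℝ) = Real.log (Real.exp 1) := (Real.log_exp 1).symm
      _ < Real.log 3 := Real.log_lt_log (Real.exp_pos 1) h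
  have hL : 0 < Real.log (Real.log 3) := Real.log_pos h3
  have hmono : Real.log (Real.log 3) ≤ Real.log (Real.log (p + 2)) := by
    apply Real.log_le_log (by linarith)
    exact Real.log_le_log (by norm_num) (by linarith)
  calc Real.log (Real.log 3) = 1 * Real.log (Real.log 3) := (one_mul _).symm
    _ ≤ p * Real.log (Real.log (p + 2)) :=
      mul_le_mul hp.le hmono hL.le (by linarith)

lemma stmt8_Lpos : 0 < Real.log (Real.log 3) := by
  have h3 : (1:ℝ) < Real.log 3 := by
    have := Real.exp_one_lt_d9
    have h : Real.exp 1 < 3 := by linarith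
    calc (1:ℝ) = Real.log (Real.exp 1) := (Real.log_exp 1).symm
      _ < Real.log 3 := Real.log_lt_log (Real.exp_pos 1) h
  exact Real.log_pos h3

/-- (∑ b_j^q)^{1/q} ≤ max(1, ∑ b_j^q) for q ≥ 1 and b_j ≥ 0; and if moreover all
b_j ≤ 1, the sup over p > 1 of (∑ b_j^q)^{1/q}/(p ln ln(p+2)) is dominated, up to an
absolute constant, by max(1, sup over p > 1 of (∑ b_j^q)/(p ln ln(p+2))), q = p/(p−1). -/
theorem stmt8 :
    (∀ (N : ℕ) (b : Fin N → ℝ), (∀ j, 0 ≤ b j) → ∀ q : ℝ, 1 ≤ q →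
      (∑ j, b j ^ q) ^ (1 / q) ≤ max 1 (∑ j, b j ^ q)) ∧
    ∃ C : ℝ, 0 < C ∧ ∀ (N : ℕ) (b : Fin N → ℝ), (∀ j, 0 ≤ b j ∧ b j ≤ 1) →
      (⨆ p : {p : ℝ // 1 < p},
          (∑ j, b j ^ (p.1 / (p.1 - 1))) ^ ((p.1 - 1) / p.1) /
            (p.1 * Real.log (Real.log (p.1 + 2)))) ≤
        C * max 1 (⨆ p : {p : ℝ // 1 < p},
          (∑ j, b j ^ (p.1 / (p.1 - 1))) / (p.1 * Real.log (Real.log (p.1 + 2)))) := by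
  constructor
  · exact stmt8_aux
  · have hL : 0 < Real.log (Real.log 3) := stmt8_Lpos
    set L := Real.log (Real.log 3) with hLdef
    have hC1 : 1 ≤ 1 / L := by
      rw [le_div_iff₀ hL, one_mul]
      have h3 : Real.log 3 ≤ 2 := by
        have := Real.log_le_sub_one_of_pos (x := 3) (by norm_num)
        linarith
      have he : (2:ℝ) < Real.exp 1 := by
        have := Real.exp_one_gt_d9; linarith
      calc L ≤ Real.log (Real.exp 1) := Real.log_le_log (by positivity) (by linarith)
        _ = 1 := Real.log_exp 1
    refine ⟨1 / L, by positivity, fun N b hb => ?_⟩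
    haveI : Nonempty {p : ℝ // 1 < p} := ⟨⟨2, by norm_num⟩⟩
    set f : {p : ℝ // 1 < p} → ℝ := fun p =>
      (∑ j, b j ^ (p.1 / (p.1 - 1))) / (p.1 * Real.log (Real.log (p.1 + 2))) with hf
    have hfbd : BddAbove (Set.range f) := by
      refine ⟨(N : ℝ) / L, ?_⟩
      rintro x ⟨p, rfl⟩
      have hp := p.2
      have hden := stmt8_logdenom hp
      have hSN : (∑ j, b j ^ (p.1 / (p.1 - 1))) ≤ N := by
        calc (∑ j, b j ^ (p.1 / (p.1 - 1))) ≤ ∑ _j : Fin N, (1:ℝ) := by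
              apply Finset.sum_le_sum
              intro j _
              exact Real.rpow_le_one (hb j).1 (hb j).2 (div_nonneg (by linarith) (by linarith))
          _ = N := by simp
      exact div_le_div₀ (Nat.cast_nonneg N) hSN hL hden
    -- RHS pieces
    have hmax0 : (0:ℝ) < max 1 (⨆ p, f p) := lt_of_lt_of_le one_pos (le_max_left _ _)
    apply ciSup_le
    intro p
    have hp := p.2
    have hden := stmt8_logdenom hp
    have hD : 0 < p.1 * Real.log (Real.log (p.1 + 2)) := lt_of_lt_of_le hL hden
    set S := ∑ j, b j ^ (p.1 / (p.1 - 1)) with hSdef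
    have hS0 : 0 ≤ S := Finset.sum_nonneg fun j _ => Real.rpow_nonneg (hb j).1 _
    have hq1 : 1 ≤ p.1 / (p.1 - 1) := by
      rw [le_div_iff₀ (by linarith)]; linarith
    have hexp : (p.1 - 1) / p.1 = 1 / (p.1 / (p.1 - 1)) := by
      field_simp
    have hkey : S ^ ((p.1 - 1) / p.1) ≤ max 1 S := by
      rw [hexp]
      exact stmt8_aux N b (fun j => (hb j).1) _ hq1
    rcases le_or_gt S 1 with hS1 | hS1
    · have : S ^ ((p.1 - 1) / p.1) ≤ 1 := by
        rw [max_eq_left hS1] at hkey; exact hkey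
      calc S ^ ((p.1 - 1) / p.1) / (p.1 * Real.log (Real.log (p.1 + 2)))
            ≤ 1 / L := by
              apply div_le_div₀ (by norm_num) this hL hden
        _ = 1 / L * 1 := (mul_one _).symm
        _ ≤ 1 / L * max 1 (⨆ p, f p) := by
              apply mul_le_mul_of_nonneg_left (le_max_left _ _) (by positivity)
    · have hkey' : S ^ ((p.1 - 1) / p.1) ≤ S := by
        rw [max_eq_right hS1.le] at hkey; exact hkey
      calc S ^ ((p.1 - 1) / p.1) / (p.1 * Real.log (Real.log (p.1 + 2)))
            ≤ S / (p.1 * Real.log (Real.log (p.1 + 2))) :=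
              div_le_div_of_nonneg_right hkey' hD.le
        _ = f p := rfl
        _ ≤ ⨆ p, f p := le_ciSup hfbd p
        _ ≤ max 1 (⨆ p, f p) := le_max_right _ _
        _ = 1 * max 1 (⨆ p, f p) := (one_mul _).symm
        _ ≤ 1 / L * max 1 (⨆ p, f p) :=
              mul_le_mul_of_nonneg_right hC1 hmax0.le
end

section
/- Let Δ₁, Δ₂, … be pairwise disjoint open subintervals of 𝕋 with centers c_j. There exist absolute constants C, c > 0 such that for every λ > 0, |{x ∈ 𝕋 : sup_{p>1} (∑_j (|Δ_j|/(|x−c_j|+|Δ_j|))^{q}) / (p ln ln(p+2)) > λ}| ≤ C exp(−cλ), where q = p/(p−1). -/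
/-!
Write `rⱼ(x) = |Δⱼ| / (|x - cⱼ| + |Δⱼ|)` and let `p` be the conjugate exponent of `q`. The core
estimate is `∫_I exp (γ ∑ rⱼ^q) ≤ 2 |I|` for `γ p ≤ 1/16`, the sum running over the intervals lying
to the right of `x` and ending inside `I`. It is proved by induction, removing the rightmost
interval `Δ`: since `exp (γ r^q) ≤ 1 + 2 γ r^q`, this costs `2γ ∫ r_Δ^q exp (γ ∑_rest)`, and a
dyadic decomposition to the left of `Δ` combined with the induction hypothesis bounds it by
`16 γ p |Δ| ≤ |Δ|`, which is paid for by the part of `I` to the right of `Δ`. Reflecting handles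
the intervals to the left of `x`, at most one interval contains `x`, and Chebyshev's inequality
gives `|{∑ rⱼ^q > M}| ≲ exp (-M / (32 p))`. Finally `p` is restricted to dyadic values
`2ᵏ ≤ p < 2ᵏ⁺¹`; the level-`k` set then has measure `≲ (log 2ᵏ)^(-λ/64)`, which is summable in `k`
with sum `≲ e^{-cλ}` once `λ` is large.
-/

open MeasureTheory Real Set

lemma exp_le_one_add_two_mul {z : ℝ} (h0 : 0 ≤ z) (h1 : z ≤ 1 / 2) : exp z ≤ 1 + 2 * z := by
  refine (exp_bound_div_one_sub_of_interval h0 (by linarith)).trans ?_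
  rw [div_le_iff₀ (by linarith)]
  nlinarith

lemma one_lt_log_of_three_le {x : ℝ} (hx : 3 ≤ x) : 1 < log x := by
  rw [lt_log_iff_exp_lt (by linarith)]
  linarith [exp_one_lt_d9]

lemma one_lt_log_two_pow_add_two (k : ℕ) : 1 < log (2 ^ k + 2) :=
  one_lt_log_of_three_le (by linarith [one_le_pow₀ (M₀ := ℝ) (n := k) one_le_two])

lemma inv_one_sub_two_rpow_le {p q : ℝ} (hpq : p.HolderConjugate q) :
    (1 - (2:ℝ) ^ (1 - q))⁻¹ ≤ 2 * p := by
  have hq : 0 < q - 1 := sub_pos.2 hpq.symm.lt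
  rw [hpq.symm.conjugate_eq]
  have hexp : 1 + (q - 1) / 2 ≤ (2:ℝ) ^ (q - 1) := by
    rw [rpow_def_of_pos two_pos]
    nlinarith [add_one_le_exp (log 2 * (q - 1)), log_two_gt_d9]
  have hinv : (2:ℝ) ^ (1 - q) = ((2:ℝ) ^ (q - 1))⁻¹ := by
    rw [← rpow_neg two_pos.le, neg_sub]
  have hpos : 0 < (2:ℝ) ^ (q - 1) := by positivity
  rw [hinv, inv_le_iff_one_le_mul₀', ← sub_nonneg]
  · field_simp
    nlinarith
  · rw [sub_pos, inv_lt_one₀ hpos]; linarith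

lemma two_pow_inv_rpow_mul (k : ℕ) (q : ℝ) :
    ((2:ℝ) ^ k)⁻¹ ^ q * 2 ^ (k + 1) = 2 * ((2:ℝ) ^ (1 - q)) ^ k := by
  rw [rpow_sub two_pos, rpow_one, div_pow, rpow_pow_comm two_pos.le, inv_rpow (by positivity)]
  field_simp
  ring

lemma le_of_disjoint_Ioo_of_le {a₁ b₁ a₂ b₂ : ℝ} (h : Disjoint (Ioo a₁ b₁) (Ioo a₂ b₂))
    (ha : a₁ ≤ a₂) (h₂ : a₂ < b₂) : b₁ ≤ a₂ := by
  rw [Ioo_disjoint_Ioo, max_eq_right ha, min_le_iff] at h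
  exact h.resolve_right h₂.not_ge

lemma measure_ge_le_exp_mul_setLIntegral {α : Type*} [MeasurableSpace α] (μ : Measure α)
    {f : α → ℝ} (hf : Measurable f) (s : Set α) {γ : ℝ} (hγ : 0 ≤ γ) (t : ℝ) :
    μ {x ∈ s | t ≤ f x} ≤
      ENNReal.ofReal (exp (-(γ * t))) * ∫⁻ x in s, ENNReal.ofReal (exp (γ * f x)) ∂μ := by
  set c := ENNReal.ofReal (exp (γ * t))
  calc μ {x ∈ s | t ≤ f x}
      ≤ μ.restrict s {x | c ≤ ENNReal.ofReal (exp (γ * f x))} := by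
        refine (measure_mono ?_).trans (Measure.le_restrict_apply _ _)
        rintro x ⟨hxs, hxt⟩
        exact ⟨ENNReal.ofReal_le_ofReal (exp_le_exp.2 (by gcongr)), hxs⟩
    _ = ENNReal.ofReal (exp (-(γ * t))) *
          (c * μ.restrict s {x | c ≤ ENNReal.ofReal (exp (γ * f x))}) := by
        rw [← mul_assoc, ← ENNReal.ofReal_mul (exp_pos _).le, ← exp_add, neg_add_cancel, exp_zero,
          ENNReal.ofReal_one, one_mul]
    _ ≤ _ := by
        gcongr
        exact mul_meas_ge_le_lintegral₀ (hf.const_mul γ).exp.ennreal_ofReal.aemeasurable c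

lemma Iic_subset_iUnion_Ioc_two_pow {A L : ℝ} (hL : 0 < L) :
    Iic A ⊆ ⋃ k : ℕ, Ioc (A + L - 2 ^ (k + 1) * L) (A + L - 2 ^ k * L) := by
  intro x hx
  obtain ⟨k, hk1, hk2⟩ := exists_nat_pow_near (x := (A - x + L) / L)
    (by rw [le_div_iff₀ hL]; linarith [mem_Iic.1 hx]) one_lt_two
  rw [le_div_iff₀ hL] at hk1
  rw [div_lt_iff₀ hL] at hk2
  exact mem_iUnion.2 ⟨k, by constructor <;> linarith⟩

lemma setLIntegral_Ioc_two_pow_mul_le {g : ℝ → ENNReal} {h : ℝ → ℝ} {A L K q : ℝ} (hL : 0 < L)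
    (hq : 0 ≤ q) (hh : ∀ x ≤ A, h x ≤ (L / (A - x + L)) ^ q)
    (hg : ∀ t, 0 ≤ t → ∫⁻ x in Icc (A - t) A, g x ≤ ENNReal.ofReal (K * t)) (k : ℕ) :
    ∫⁻ x in Ioc (A + L - 2 ^ (k + 1) * L) (A + L - 2 ^ k * L), ENNReal.ofReal (h x) * g x ≤
      ENNReal.ofReal (2 * K * L * ((2:ℝ) ^ (1 - q)) ^ k) := by
  set P := Ioc (A + L - 2 ^ (k + 1) * L) (A + L - 2 ^ k * L)
  have h2k : (1:ℝ) ≤ 2 ^ k := one_le_pow₀ one_le_two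
  have hPsub : P ⊆ Icc (A - 2 ^ (k + 1) * L) A := by
    intro x hx
    have : (2:ℝ) ^ (k + 1) = 2 * 2 ^ k := by ring
    constructor <;> nlinarith [hx.1, hx.2]
  have hhP : ∀ x ∈ P, h x ≤ ((2:ℝ) ^ k)⁻¹ ^ q := by
    intro x hx
    refine (hh x (hPsub hx).2).trans
      (rpow_le_rpow (by have := (hPsub hx).2; positivity) ?_ hq)
    rw [div_le_iff₀ (by linarith [(hPsub hx).2]), inv_mul_eq_div, le_div_iff₀ (by positivity)]
    linarith [hx.2]
  calc ∫⁻ x in P, ENNReal.ofReal (h x) * g x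
      ≤ ∫⁻ x in P, ENNReal.ofReal (((2:ℝ) ^ k)⁻¹ ^ q) * g x :=
        setLIntegral_mono' measurableSet_Ioc fun x hx => by gcongr; exact hhP x hx
    _ = ENNReal.ofReal (((2:ℝ) ^ k)⁻¹ ^ q) * ∫⁻ x in P, g x :=
        lintegral_const_mul' _ _ ENNReal.ofReal_ne_top
    _ ≤ ENNReal.ofReal (((2:ℝ) ^ k)⁻¹ ^ q) * ENNReal.ofReal (K * (2 ^ (k + 1) * L)) := by
        gcongr
        exact (lintegral_mono_set hPsub).trans (hg _ (by positivity))
    _ = ENNReal.ofReal (2 * K * L * ((2:ℝ) ^ (1 - q)) ^ k) := by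
        rw [← ENNReal.ofReal_mul (by positivity)]
        congr 1
        linear_combination K * L * two_pow_inv_rpow_mul k q

lemma lintegral_Iic_mul_le_of_decay {g : ℝ → ENNReal} {h : ℝ → ℝ} {A L K p q : ℝ} (hL : 0 < L)
    (hK : 0 ≤ K) (hpq : p.HolderConjugate q) (hh : ∀ x ≤ A, h x ≤ (L / (A - x + L)) ^ q)
    (hg : ∀ t, 0 ≤ t → ∫⁻ x in Icc (A - t) A, g x ≤ ENNReal.ofReal (K * t)) :
    ∫⁻ x in Iic A, ENNReal.ofReal (h x) * g x ≤ ENNReal.ofReal (4 * K * p * L) := by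
  set ρ : ℝ := (2:ℝ) ^ (1 - q)
  have hρ0 : 0 ≤ ρ := by positivity
  have hρ1 : ρ < 1 := rpow_lt_one_of_one_lt_of_neg one_lt_two (by linarith [hpq.symm.lt])
  have hsum : Summable fun k : ℕ => 2 * K * L * ρ ^ k :=
    (summable_geometric_of_lt_one hρ0 hρ1).mul_left _
  calc ∫⁻ x in Iic A, ENNReal.ofReal (h x) * g x
      ≤ ∫⁻ x in ⋃ k : ℕ, Ioc (A + L - 2 ^ (k + 1) * L) (A + L - 2 ^ k * L),
          ENNReal.ofReal (h x) * g x := lintegral_mono_set (Iic_subset_iUnion_Ioc_two_pow hL)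
    _ ≤ ∑' k : ℕ, ∫⁻ x in Ioc (A + L - 2 ^ (k + 1) * L) (A + L - 2 ^ k * L),
          ENNReal.ofReal (h x) * g x := lintegral_iUnion_le _ _
    _ ≤ ∑' k, ENNReal.ofReal (2 * K * L * ρ ^ k) := ENNReal.tsum_le_tsum
          (setLIntegral_Ioc_two_pow_mul_le hL hpq.symm.nonneg hh hg)
    _ = ENNReal.ofReal (2 * K * L * (1 - ρ)⁻¹) := by
      rw [← ENNReal.ofReal_tsum_of_nonneg (fun k => by positivity) hsum, tsum_mul_left,
        tsum_geometric_of_lt_one hρ0 hρ1]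
    _ ≤ ENNReal.ofReal (4 * K * p * L) := by
      refine ENNReal.ofReal_le_ofReal ?_
      nlinarith [mul_le_mul_of_nonneg_left (inv_one_sub_two_rpow_le hpq)
        (by positivity : 0 ≤ 2 * K * L)]

variable {ι : Type*}

noncomputable def proximity (a b : ι → ℝ) (j : ι) (x : ℝ) : ℝ :=
  (b j - a j) / (|x - (a j + b j) / 2| + (b j - a j))

noncomputable def rightSum (a b : ι → ℝ) (q : ℝ) (F : Finset ι) (x : ℝ) : ℝ :=
  ∑ j ∈ F, if x ≤ a j then proximity a b j x ^ q else 0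

section Proximity

variable {a b : ι → ℝ} {j : ι}

lemma proximity_pos (h : a j < b j) (x : ℝ) : 0 < proximity a b j x :=
  div_pos (sub_pos.2 h) (add_pos_of_nonneg_of_pos (abs_nonneg _) (sub_pos.2 h))

lemma proximity_le_one (h : a j < b j) (x : ℝ) : proximity a b j x ≤ 1 :=
  div_le_one_of_le₀ (le_add_of_nonneg_left (abs_nonneg _))
    (add_nonneg (abs_nonneg _) (sub_pos.2 h).le)

lemma rpow_proximity_le_one (h : a j < b j) (x : ℝ) {q : ℝ} (hq : 0 ≤ q) :
    proximity a b j x ^ q ≤ 1 :=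
  rpow_le_one (proximity_pos h x).le (proximity_le_one h x) hq

lemma proximity_le_of_le (h : a j < b j) {x : ℝ} (hx : x ≤ a j) :
    proximity a b j x ≤ (b j - a j) / (a j - x + (b j - a j)) := by
  have : a j - x ≤ |x - (a j + b j) / 2| := by
    rw [abs_sub_comm]; exact le_trans (by linarith) (le_abs_self _)
  exact div_le_div_of_nonneg_left (by linarith) (by linarith) (by linarith)

lemma proximity_neg (x : ℝ) : proximity (-b) (-a) j (-x) = proximity a b j x := by
  simp only [proximity, Pi.neg_apply]
  rw [show -x - (-b j + -a j) / 2 = -(x - (a j + b j) / 2) by ring, abs_neg,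
    show -a j - -b j = b j - a j by ring]

lemma measurable_proximity : Measurable (proximity a b j) := by
  unfold proximity; fun_prop

end Proximity

section RightSum

variable {a b : ι → ℝ} {q : ℝ} {F : Finset ι}

lemma measurable_rightSum : Measurable (rightSum a b q F) :=
  Finset.measurable_sum _ fun _ _ =>
    Measurable.ite measurableSet_Iic (measurable_proximity.pow_const q) measurable_const

lemma rightSum_eq_zero {x : ℝ} (hx : ∀ j ∈ F, a j < x) : rightSum a b q F x = 0 :=
  Finset.sum_eq_zero fun j hj => if_neg (not_le.2 (hx j hj))

lemma rightSum_eq_add_erase [DecidableEq ι] {j : ι} (hj : j ∈ F) {x : ℝ} (hx : x ≤ a j) :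
    rightSum a b q F x = proximity a b j x ^ q + rightSum a b q (F.erase j) x := by
  rw [rightSum, ← Finset.add_sum_erase F _ hj, if_pos hx, rightSum]

end RightSum

section Intervals

variable {a b : ι → ℝ} {p q γ : ℝ}

lemma setLIntegral_exp_rightSum_eq_volume {F : Finset ι} {s : Set ℝ} (hs : MeasurableSet s)
    (h : ∀ x ∈ s, ∀ j ∈ F, a j < x) :
    ∫⁻ x in s, ENNReal.ofReal (exp (γ * rightSum a b q F x)) = volume s := by
  rw [← setLIntegral_one]
  exact setLIntegral_congr_fun hs fun x hx => by simp [rightSum_eq_zero (h x hx)]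

lemma lintegral_exp_rightSum_le_of_erase [DecidableEq ι] {F : Finset ι} {j : ι} (hj : j ∈ F)
    (hab : a j < b j) (hpq : p.HolderConjugate q) (hγ : 0 ≤ γ) (hγ' : γ ≤ 1 / 2)
    (hrest : ∀ w, ∫⁻ x in Icc w (a j), ENNReal.ofReal (exp (γ * rightSum a b q (F.erase j) x)) ≤
      2 * volume (Icc w (a j))) (w : ℝ) :
    ∫⁻ x in Icc w (a j), ENNReal.ofReal (exp (γ * rightSum a b q F x)) ≤
      2 * volume (Icc w (a j)) + ENNReal.ofReal (16 * γ * p * (b j - a j)) := by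
  have hq := hpq.symm.lt
  set g : ℝ → ENNReal := fun x => ENNReal.ofReal (exp (γ * rightSum a b q (F.erase j) x))
  set r : ℝ → ℝ := fun x => proximity a b j x ^ q
  have hpoint : ∀ x ∈ Icc w (a j), ENNReal.ofReal (exp (γ * rightSum a b q F x)) ≤
      g x + ENNReal.ofReal (2 * γ) * (ENNReal.ofReal (r x) * g x) := by
    intro x hx
    have hr0 : 0 ≤ r x := by have := proximity_pos hab x; positivity
    have hr1 : r x ≤ 1 := rpow_proximity_le_one hab x (by linarith)
    have hexp := exp_le_one_add_two_mul (mul_nonneg hγ hr0) (by nlinarith)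
    rw [← ENNReal.ofReal_mul hr0, ← ENNReal.ofReal_mul (by positivity),
      ← ENNReal.ofReal_add (by positivity) (by positivity),
      rightSum_eq_add_erase hj hx.2, mul_add, exp_add]
    exact ENNReal.ofReal_le_ofReal (by nlinarith [exp_pos (γ * rightSum a b q (F.erase j) x)])
  have hdecay : ∫⁻ x in Iic (a j), ENNReal.ofReal (r x) * g x ≤
      ENNReal.ofReal (8 * p * (b j - a j)) := by
    convert lintegral_Iic_mul_le_of_decay (sub_pos.2 hab) zero_le_two hpq (fun x hx => rpow_le_rpow
      (proximity_pos hab x).le (proximity_le_of_le hab hx) (by linarith)) (fun t ht => ?_) using 2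
    · ring
    · refine (hrest _).trans_eq ?_
      rw [volume_Icc, sub_sub_cancel, ENNReal.ofReal_mul zero_le_two, ENNReal.ofReal_ofNat]
  calc _ ≤ ∫⁻ x in Icc w (a j), g x + ENNReal.ofReal (2 * γ) * (ENNReal.ofReal (r x) * g x) :=
        setLIntegral_mono' measurableSet_Icc hpoint
    _ = (∫⁻ x in Icc w (a j), g x) +
          ENNReal.ofReal (2 * γ) * ∫⁻ x in Icc w (a j), ENNReal.ofReal (r x) * g x := by
        rw [lintegral_add_left (measurable_rightSum.const_mul γ).exp.ennreal_ofReal,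
          lintegral_const_mul' _ _ ENNReal.ofReal_ne_top]
    _ ≤ 2 * volume (Icc w (a j)) +
          ENNReal.ofReal (2 * γ) * ENNReal.ofReal (8 * p * (b j - a j)) := by
        gcongr
        · exact hrest w
        · exact (lintegral_mono_set Icc_subset_Iic_self).trans hdecay
    _ = _ := by rw [← ENNReal.ofReal_mul (by positivity)]; ring_nf

theorem lintegral_exp_rightSum_le (hab : ∀ j, a j < b j)
    (hdisj : Pairwise fun i j => Disjoint (Ioo (a i) (b i)) (Ioo (a j) (b j)))
    (hpq : p.HolderConjugate q) (hγ : 0 ≤ γ) (hγp : γ * p ≤ 1 / 16)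
    (F : Finset ι) {w v : ℝ} (hv : ∀ j ∈ F, b j ≤ v) :
    ∫⁻ x in Icc w v, ENNReal.ofReal (exp (γ * rightSum a b q F x)) ≤ 2 * volume (Icc w v) := by
  classical
  induction F using Finset.strongInduction generalizing w v with
  | H F ih =>
  have hvol : volume (Icc w v) ≤ 2 * volume (Icc w v) := le_mul_of_one_le_left' one_le_two
  rcases F.eq_empty_or_nonempty with rfl | hne
  · exact (setLIntegral_exp_rightSum_eq_volume measurableSet_Icc (by simp)).trans_le hvol
  obtain ⟨j, hj, hmax⟩ := F.exists_max_image a hne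
  rcases lt_or_ge (a j) w with hjw | hwj
  · exact (setLIntegral_exp_rightSum_eq_volume measurableSet_Icc fun x hx i hi =>
      ((hmax i hi).trans_lt hjw).trans_le hx.1).trans_le hvol
  have hp : 1 ≤ p := hpq.lt.le
  have hleft := lintegral_exp_rightSum_le_of_erase hj (hab j) hpq hγ
    (by nlinarith) (fun w => ih _ (Finset.erase_ssubset hj) fun i hi =>
      le_of_disjoint_Ioo_of_le (hdisj (Finset.ne_of_mem_erase hi))
        (hmax i (Finset.mem_of_mem_erase hi)) (hab j)) w
  have hsmall : 16 * γ * p * (b j - a j) ≤ v - a j := by nlinarith [hv j hj, hab j]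
  calc ∫⁻ x in Icc w v, ENNReal.ofReal (exp (γ * rightSum a b q F x))
      ≤ ∫⁻ x in Icc w (a j) ∪ Ioc (a j) v, ENNReal.ofReal (exp (γ * rightSum a b q F x)) :=
        lintegral_mono_set fun x hx =>
          (le_or_gt x (a j)).imp (fun h => ⟨hx.1, h⟩) fun h => ⟨h, hx.2⟩
    _ ≤ _ := lintegral_union_le _ _ _
    _ ≤ 2 * volume (Icc w (a j)) + ENNReal.ofReal (v - a j) + volume (Ioc (a j) v) := by
        rw [setLIntegral_exp_rightSum_eq_volume measurableSet_Ioc fun x hx i hi =>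
          (hmax i hi).trans_lt hx.1]
        gcongr
        exact hleft.trans (by gcongr)
    _ = 2 * volume (Icc w v) := by
        rw [volume_Icc, volume_Icc, volume_Ioc, add_assoc, ← two_mul, ← mul_add,
          ← ENNReal.ofReal_add (by linarith) (by linarith [hab j, hv j hj])]
        congr 2; ring

lemma volume_rightSum_ge_le (hab : ∀ j, a j < b j)
    (hdisj : Pairwise fun i j => Disjoint (Ioo (a i) (b i)) (Ioo (a j) (b j)))
    (hpq : p.HolderConjugate q) (hγ : 0 ≤ γ) (hγp : γ * p ≤ 1 / 16)
    (F : Finset ι) {w v : ℝ} (hv : ∀ j ∈ F, b j ≤ v) (t : ℝ) :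
    volume {x ∈ Icc w v | t ≤ rightSum a b q F x} ≤
      ENNReal.ofReal (exp (-(γ * t))) * (2 * volume (Icc w v)) :=
  (measure_ge_le_exp_mul_setLIntegral _ measurable_rightSum _ hγ t).trans
    (by gcongr; exact lintegral_exp_rightSum_le hab hdisj hpq hγ hγp F hv)

/- `rightSum (-b) (-a) q F (-x)` is the sum of `rⱼ(x)^q` over the intervals of `F` lying to the
left of `x`. -/
lemma volume_rightSum_neg_ge_le (hab : ∀ j, a j < b j)
    (hdisj : Pairwise fun i j => Disjoint (Ioo (a i) (b i)) (Ioo (a j) (b j)))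
    (hpq : p.HolderConjugate q) (hγ : 0 ≤ γ) (hγp : γ * p ≤ 1 / 16)
    (F : Finset ι) {w v : ℝ} (hw : ∀ j ∈ F, w ≤ a j) (t : ℝ) :
    volume {x ∈ Icc w v | t ≤ rightSum (-b) (-a) q F (-x)} ≤
      ENNReal.ofReal (exp (-(γ * t))) * (2 * volume (Icc w v)) := by
  have hset : {x ∈ Icc w v | t ≤ rightSum (-b) (-a) q F (-x)} =
      Neg.neg ⁻¹' {y ∈ Icc (-v) (-w) | t ≤ rightSum (-b) (-a) q F y} := by
    ext x
    simp only [mem_preimage, mem_ofPred_eq, mem_Icc, neg_le_neg_iff, and_comm (a := x ≤ v)]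
  have hdisj' : Pairwise fun i j => Disjoint (Ioo ((-b) i) ((-a) i)) (Ioo ((-b) j) ((-a) j)) :=
    fun i j hij => by
      simp only [Pi.neg_apply, ← neg_Ioo]
      exact (hdisj hij).preimage _
  rw [hset, Measure.measure_preimage_neg]
  have := volume_rightSum_ge_le (a := -b) (b := -a) (w := -v) (v := -w)
    (fun j => neg_lt_neg (hab j)) hdisj' hpq hγ hγp F (fun j hj => neg_le_neg (hw j hj)) t
  rwa [volume_Icc, neg_sub_neg, ← volume_Icc] at this

lemma sum_rpow_proximity_le (hab : ∀ j, a j < b j)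
    (hdisj : Pairwise fun i j => Disjoint (Ioo (a i) (b i)) (Ioo (a j) (b j)))
    (hq : 0 ≤ q) (F : Finset ι) (x : ℝ) :
    ∑ j ∈ F, proximity a b j x ^ q ≤ 1 + rightSum a b q F x + rightSum (-b) (-a) q F (-x) := by
  classical
  have hinside : ∑ j ∈ F, (if x ∈ Ioo (a j) (b j) then (1:ℝ) else 0) ≤ 1 := by
    rw [Finset.sum_boole]
    exact_mod_cast Finset.card_le_one.2 fun i hi j hj => by
      by_contra hij
      exact disjoint_left.1 (hdisj hij) (Finset.mem_filter.1 hi).2 (Finset.mem_filter.1 hj).2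
  have hleft : rightSum (-b) (-a) q F (-x) =
      ∑ j ∈ F, if b j ≤ x then proximity a b j x ^ q else 0 := by
    simp only [rightSum, proximity_neg, Pi.neg_apply, neg_le_neg_iff]
  calc ∑ j ∈ F, proximity a b j x ^ q
      ≤ ∑ j ∈ F, ((if x ∈ Ioo (a j) (b j) then 1 else 0) +
          (if x ≤ a j then proximity a b j x ^ q else 0) +
          (if b j ≤ x then proximity a b j x ^ q else 0)) := by
        refine Finset.sum_le_sum fun j _ => ?_
        have h0 : 0 ≤ proximity a b j x ^ q := by have := proximity_pos (hab j) x; positivity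
        have h1 := rpow_proximity_le_one (hab j) x hq
        by_cases hl : x ≤ a j
        · rw [if_pos hl]; split_ifs <;> linarith
        by_cases hr : b j ≤ x
        · rw [if_pos hr]; split_ifs <;> linarith
        rw [if_pos (show x ∈ Ioo (a j) (b j) from ⟨not_le.1 hl, not_le.1 hr⟩), if_neg hl, if_neg hr]
        linarith
    _ ≤ 1 + rightSum a b q F x + rightSum (-b) (-a) q F (-x) := by
        rw [Finset.sum_add_distrib, Finset.sum_add_distrib, hleft, rightSum]
        gcongr

lemma volume_sum_rpow_proximity_gt_le (hab : ∀ j, a j < b j)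
    (hdisj : Pairwise fun i j => Disjoint (Ioo (a i) (b i)) (Ioo (a j) (b j)))
    (hpq : p.HolderConjugate q) (hγ : 0 ≤ γ) (hγp : γ * p ≤ 1 / 16)
    {w v : ℝ} (ha : ∀ j, w ≤ a j) (hb : ∀ j, b j ≤ v) (F : Finset ι) (M : ℝ) :
    volume {x ∈ Icc w v | M < ∑ j ∈ F, proximity a b j x ^ q} ≤
      ENNReal.ofReal (exp (-(γ * ((M - 1) / 2)))) * (4 * volume (Icc w v)) := by
  have hsub : {x ∈ Icc w v | M < ∑ j ∈ F, proximity a b j x ^ q} ⊆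
      {x ∈ Icc w v | (M - 1) / 2 ≤ rightSum a b q F x} ∪
        {x ∈ Icc w v | (M - 1) / 2 ≤ rightSum (-b) (-a) q F (-x)} := by
    rintro x ⟨hx, hM⟩
    have := sum_rpow_proximity_le hab hdisj hpq.symm.nonneg F x
    by_contra! h
    simp only [mem_union, mem_ofPred_eq, not_or, not_and, not_le] at h
    linarith [h.1 hx, h.2 hx]
  calc _ ≤ _ := measure_mono hsub
    _ ≤ _ := measure_union_le _ _
    _ ≤ ENNReal.ofReal (exp (-(γ * ((M - 1) / 2)))) * (2 * volume (Icc w v)) +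
          ENNReal.ofReal (exp (-(γ * ((M - 1) / 2)))) * (2 * volume (Icc w v)) :=
        add_le_add (volume_rightSum_ge_le hab hdisj hpq hγ hγp F (fun j _ => hb j) _)
          (volume_rightSum_neg_ge_le hab hdisj hpq hγ hγp F (fun j _ => ha j) _)
    _ = _ := by rw [← mul_add, ← add_mul]; norm_num

lemma volume_exists_sum_rpow_proximity_gt_le [Countable ι] (hab : ∀ j, a j < b j)
    (hdisj : Pairwise fun i j => Disjoint (Ioo (a i) (b i)) (Ioo (a j) (b j)))
    (hpq : p.HolderConjugate q) (hγ : 0 ≤ γ) (hγp : γ * p ≤ 1 / 16)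
    {w v : ℝ} (ha : ∀ j, w ≤ a j) (hb : ∀ j, b j ≤ v) (M : ℝ) :
    volume {x ∈ Icc w v | ∃ F : Finset ι, M < ∑ j ∈ F, proximity a b j x ^ q} ≤
      ENNReal.ofReal (exp (-(γ * ((M - 1) / 2)))) * (4 * volume (Icc w v)) := by
  have hmono : Monotone fun F : Finset ι => {x ∈ Icc w v | M < ∑ j ∈ F, proximity a b j x ^ q} :=
    fun F G hFG x hx => ⟨hx.1, hx.2.trans_le (Finset.sum_le_sum_of_subset_of_nonneg hFG
      fun j _ _ => (rpow_pos_of_pos (proximity_pos (hab j) x) q).le)⟩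
  have hset : {x ∈ Icc w v | ∃ F : Finset ι, M < ∑ j ∈ F, proximity a b j x ^ q} =
      ⋃ F : Finset ι, {x ∈ Icc w v | M < ∑ j ∈ F, proximity a b j x ^ q} := by
    ext x; simp only [mem_ofPred_eq, mem_iUnion, exists_and_left]
  rw [hset, hmono.measure_iUnion]
  exact iSup_le fun F => volume_sum_rpow_proximity_gt_le hab hdisj hpq hγ hγp ha hb F M

end Intervals

lemma exists_dyadic_lt_sum_of_lt_iSup {r : ι → ℝ} (hr0 : ∀ j, 0 < r j) (hr1 : ∀ j, r j ≤ 1)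
    {lam : ℝ} (hlam : 0 ≤ lam)
    (h : lam < ⨆ p : {p : ℝ // 1 < p},
      (∑' j, r j ^ (p.1 / (p.1 - 1))) / (p.1 * log (log (p.1 + 2)))) :
    ∃ k : ℕ, ∃ F : Finset ι,
      lam * 2 ^ k * log (log (2 ^ k + 2)) < ∑ j ∈ F, r j ^ conjExponent (2 ^ (k + 1)) := by
  have : Nonempty {p : ℝ // 1 < p} := ⟨⟨2, one_lt_two⟩⟩
  obtain ⟨⟨p, hp⟩, hlt⟩ := exists_lt_of_lt_ciSup h
  obtain ⟨k, hk, hk'⟩ := exists_nat_pow_near hp.le one_lt_two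
  have h2k : (1:ℝ) ≤ 2 ^ k := one_le_pow₀ one_le_two
  have hll : 0 < log (log (2 ^ k + 2)) := log_pos (one_lt_log_two_pow_add_two k)
  have hden : 2 ^ k * log (log (2 ^ k + 2)) ≤ p * log (log (p + 2)) :=
    mul_le_mul hk (log_le_log (by linarith [one_lt_log_two_pow_add_two k])
      (log_le_log (by positivity) (by linarith))) hll.le (by linarith)
  have hexp : conjExponent (2 ^ (k + 1)) ≤ p / (p - 1) := by
    have : (2:ℝ) ^ (k + 1) = 2 * 2 ^ k := by ring
    rw [conjExponent, div_le_div_iff₀ (by linarith) (by linarith)]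
    nlinarith
  refine ⟨k, ?_⟩
  by_contra! hF
  have hM : 0 ≤ lam * 2 ^ k * log (log (2 ^ k + 2)) := by simpa using hF ∅
  have hsum : ∑' j, r j ^ (p / (p - 1)) ≤ _ := tsum_le_of_sum_le' hM fun F =>
    (Finset.sum_le_sum fun j _ => rpow_le_rpow_of_exponent_ge (hr0 j) (hr1 j) hexp).trans (hF F)
  rw [lt_div_iff₀ (by nlinarith)] at hlt
  nlinarith [mul_le_mul_of_nonneg_left hden hlam]

lemma summable_log_two_pow_add_two_rpow : Summable fun k : ℕ => log (2 ^ k + 2) ^ (-2 : ℝ) := by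
  refine ((summable_nat_rpow.2 (by norm_num : (-2:ℝ) < -1)).mul_left
    (log 2 ^ (-2 : ℝ))).of_norm_bounded_eventually_nat ?_
  filter_upwards [Filter.eventually_ge_atTop 1] with k hk
  have hk' : (1:ℝ) ≤ k := by exact_mod_cast hk
  rw [norm_of_nonneg (rpow_nonneg (zero_le_one.trans (one_lt_log_two_pow_add_two k).le) _),
    ← mul_rpow (by positivity) (by positivity)]
  refine rpow_le_rpow_of_nonpos (by positivity) ?_ (by norm_num)
  rw [mul_comm, ← log_pow]
  exact log_le_log (by positivity) (by linarith)

/- The Chebyshev exponent of the level-`k` set, for `γ = 1 / (16 · 2ᵏ⁺¹)` and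
`M = λ 2ᵏ log (log (2ᵏ + 2))`; for `λ ≥ 128` it still leaves the summable factor
`(log (2ᵏ + 2))⁻²`. -/
lemma exp_neg_dyadic_exponent_le {lam : ℝ} (hlam : 128 ≤ lam) (k : ℕ) :
    exp (-(1 / (16 * 2 ^ (k + 1)) * ((lam * 2 ^ k * log (log (2 ^ k + 2)) - 1) / 2))) ≤
      exp (1 + 2 * log (log 3)) * exp (-(log (log 3) / 64 * lam)) *
        log (2 ^ k + 2) ^ (-2 : ℝ) := by
  have h2k : (1:ℝ) ≤ 2 ^ k := one_le_pow₀ one_le_two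
  have hlog := one_lt_log_two_pow_add_two k
  have hδ : log (log 3) ≤ log (log (2 ^ k + 2)) :=
    log_le_log (log_pos (by norm_num)) (log_le_log (by norm_num) (by linarith))
  rw [rpow_def_of_pos (by linarith), ← exp_add, ← exp_add, exp_le_exp]
  have : (2:ℝ) ^ (k + 1) = 2 * 2 ^ k := by ring
  rw [this]
  field_simp
  nlinarith [mul_le_mul_of_nonneg_left hδ (by linarith : (0:ℝ) ≤ lam - 128)]

lemma volume_dyadic_level_le [Countable ι] {a b : ι → ℝ} (hab : ∀ j, a j < b j)
    (hdisj : Pairwise fun i j => Disjoint (Ioo (a i) (b i)) (Ioo (a j) (b j)))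
    {w v : ℝ} (ha : ∀ j, w ≤ a j) (hb : ∀ j, b j ≤ v) {lam : ℝ} (hlam : 128 ≤ lam) (k : ℕ) :
    volume {x ∈ Icc w v | ∃ F : Finset ι, lam * 2 ^ k * log (log (2 ^ k + 2)) <
        ∑ j ∈ F, proximity a b j x ^ conjExponent (2 ^ (k + 1))} ≤
      ENNReal.ofReal (4 * exp (1 + 2 * log (log 3)) * exp (-(log (log 3) / 64 * lam)) *
        log (2 ^ k + 2) ^ (-2 : ℝ)) * volume (Icc w v) := by
  have hp : (1:ℝ) < 2 ^ (k + 1) := one_lt_pow₀ one_lt_two k.succ_ne_zero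
  refine (volume_exists_sum_rpow_proximity_gt_le (γ := 1 / (16 * 2 ^ (k + 1))) hab hdisj
    (HolderConjugate.conjExponent hp) (by positivity) (by field_simp; rfl) ha hb _).trans ?_
  rw [← mul_assoc, ← ENNReal.ofReal_ofNat 4, ← ENNReal.ofReal_mul (exp_pos _).le]
  refine mul_le_mul_left (ENNReal.ofReal_le_ofReal ?_) _
  nlinarith [exp_neg_dyadic_exponent_le hlam k]

lemma volume_superlevel_le [Countable ι] {a b : ι → ℝ} (hab : ∀ j, a j < b j)
    (hdisj : Pairwise fun i j => Disjoint (Ioo (a i) (b i)) (Ioo (a j) (b j)))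
    {w v : ℝ} (ha : ∀ j, w ≤ a j) (hb : ∀ j, b j ≤ v) {lam : ℝ} (hlam : 128 ≤ lam) :
    volume {x ∈ Icc w v | lam < ⨆ p : {p : ℝ // 1 < p},
        (∑' j, proximity a b j x ^ (p.1 / (p.1 - 1))) / (p.1 * log (log (p.1 + 2)))} ≤
      ENNReal.ofReal (4 * exp (1 + 2 * log (log 3)) * exp (-(log (log 3) / 64 * lam)) *
        ∑' k : ℕ, log (2 ^ k + 2) ^ (-2 : ℝ)) * volume (Icc w v) := by
  set X := 4 * exp (1 + 2 * log (log 3)) * exp (-(log (log 3) / 64 * lam))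
  calc _ ≤ ∑' k : ℕ, volume {x ∈ Icc w v | ∃ F : Finset ι,
          lam * 2 ^ k * log (log (2 ^ k + 2)) <
            ∑ j ∈ F, proximity a b j x ^ conjExponent (2 ^ (k + 1))} := by
        refine (measure_mono fun x hx => mem_iUnion.2 ?_).trans (measure_iUnion_le _)
        obtain ⟨k, hk⟩ := exists_dyadic_lt_sum_of_lt_iSup (r := fun j => proximity a b j x)
          (fun j => proximity_pos (hab j) x) (fun j => proximity_le_one (hab j) x)
          (by linarith) hx.2
        exact ⟨k, hx.1, hk⟩
    _ ≤ ∑' k : ℕ, ENNReal.ofReal (X * log (2 ^ k + 2) ^ (-2 : ℝ)) * volume (Icc w v) :=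
        ENNReal.tsum_le_tsum fun k => volume_dyadic_level_le hab hdisj ha hb hlam k
    _ = _ := by
        rw [ENNReal.tsum_mul_right, ← ENNReal.ofReal_tsum_of_nonneg (fun k => mul_nonneg
          (by positivity) (rpow_nonneg (zero_le_one.trans (one_lt_log_two_pow_add_two k).le) _))
          (summable_log_two_pow_add_two_rpow.mul_left X), tsum_mul_left]

/-- Oskolkov's exponential distributional estimate: for pairwise disjoint open intervals
Δ_j = (a_j, b_j) ⊂ 𝕋 with centers c_j,
|{x : sup_{p>1} (∑_j (|Δ_j|/(|x−c_j|+|Δ_j|))^q)/(p ln ln(p+2)) > λ}| ≤ C e^{−cλ}. -/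
theorem stmt14 (a b : ℕ → ℝ) (hab : ∀ j, a j < b j)
    (hsub : ∀ j, Set.Ioo (a j) (b j) ⊆ Set.Ico (-π) π)
    (hdisj : Pairwise fun i j => Disjoint (Set.Ioo (a i) (b i)) (Set.Ioo (a j) (b j))) :
    ∃ C : ℝ, 0 < C ∧ ∃ c : ℝ, 0 < c ∧ ∀ lam : ℝ, 0 < lam →
      volume {x ∈ Set.Ico (-π) π |
          lam < ⨆ p : {p : ℝ // 1 < p},
            (∑' j : ℕ, ((b j - a j) / (|x - (a j + b j) / 2| + (b j - a j))) ^ (p.1 / (p.1 - 1))) /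
              (p.1 * Real.log (Real.log (p.1 + 2)))} ≤
        ENNReal.ofReal (C * Real.exp (-c * lam)) := by
  have hend : ∀ j, -π ≤ a j ∧ b j ≤ π := fun j => by
    have := closure_mono ((hsub j).trans Ico_subset_Icc_self)
    rwa [closure_Ioo (hab j).ne, closure_Icc, Icc_subset_Icc_iff (hab j).le] at this
  set δ := log (log 3)
  set S := ∑' k : ℕ, log (2 ^ k + 2) ^ (-2 : ℝ)
  have hδ : 0 < δ := log_pos (one_lt_log_of_three_le le_rfl)
  have hS : 0 ≤ S := tsum_nonneg fun k =>
    rpow_nonneg (zero_le_one.trans (one_lt_log_two_pow_add_two k).le) _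
  refine ⟨8 * π * exp (1 + 2 * δ) * (1 + S), by positivity, δ / 64, by positivity,
    fun lam hlam => ?_⟩
  rcases lt_or_ge lam 128 with hsmall | hlarge
  · refine (measure_mono (sep_subset _ _)).trans ?_
    rw [volume_Ico]
    refine ENNReal.ofReal_le_ofReal ?_
    have : 1 ≤ exp (1 + 2 * δ) * exp (-(δ / 64) * lam) := by
      rw [← exp_add, one_le_exp_iff]; nlinarith
    nlinarith [mul_le_mul_of_nonneg_left this (by positivity : (0:ℝ) ≤ 8 * π * (1 + S)), pi_pos]
  · refine (measure_mono ?_).trans <| (volume_superlevel_le hab hdisj (fun j => (hend j).1)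
      (fun j => (hend j).2) hlarge).trans ?_
    · exact fun x hx => ⟨Ico_subset_Icc_self hx.1, hx.2⟩
    rw [volume_Icc, ← ENNReal.ofReal_mul (by positivity)]
    refine ENNReal.ofReal_le_ofReal ?_
    rw [neg_mul]
    have : 0 < 8 * π * exp (1 + 2 * δ) * exp (-(δ / 64 * lam)) := by positivity
    nlinarith
end
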